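/- Let X be a Stein manifold and K a compact subset. Then a point p lies outside the hull H(K) (the set of points x such that every global holomorphic function vanishing at x also vanishes somewhere on K) if and only if there exists a strong meromorphic function m = f/g on X (f, g entire with coprime germs at every point) whose indeterminacy locus avoids K ∪ {p} and which satisfies |m(p)| > sup_K |m|. In other words, H(K) equals the strong meromorphic hull SM-hull(K). -/

import Mathlib

open Filter Topology Set Manifold ENNReal
open scoped Manifold

noncomputable section

/-- The model space `ℂ^n`. -/
abbrev Em (n : ℕ) : Type := EuclideanSpace ℂ (Fin n)

variable (n : ℕ) {X : Type*} [TopologicalSpace X] [ChartedSpace (Em n) X]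

/-- A function on a complex `n`-manifold is holomorphic if it is `ℂ`-differentiable
in the manifold sense. -/
def Holo (f : X → ℂ) : Prop :=
  MDifferentiable 𝓘(ℂ, Em n) 𝓘(ℂ) f

/-- Holomorphy on a subset. -/
def HoloOn (f : X → ℂ) (s : Set X) : Prop :=
  MDifferentiableOn 𝓘(ℂ, Em n) 𝓘(ℂ) f s

/-- The `O(X)`-convex hull of a compact set. -/
def holoHull (K : Set X) : Set X :=
  {x | ∀ f : X → ℂ, Holo n f → ‖f x‖ ≤ sSup ((fun y => ‖f y‖) '' K)}

/-- The `O(Ω)`-convex hull of `K` taken inside an open set `Ω`. -/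
def holoHullIn (Ω K : Set X) : Set X :=
  {x ∈ Ω | ∀ f : X → ℂ, HoloOn n f Ω → ‖f x‖ ≤ sSup ((fun y => ‖f y‖) '' K)}

/-- A Stein manifold: holomorphically separable and holomorphically convex. -/
def IsStein (n : ℕ) (X : Type*) [TopologicalSpace X] [ChartedSpace (Em n) X] : Prop :=
  (∀ x y : X, x ≠ y → ∃ f : X → ℂ, Holo n f ∧ f x ≠ f y) ∧
  ∀ K : Set X, IsCompact K → IsCompact (holoHull n K)

/-- The germs of `f` and `g` at `p` are relatively prime: every common holomorphic
factor of `f` and `g` near `p` is a unit at `p`. -/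
def CoprimeAt (f g : X → ℂ) (p : X) : Prop :=
  ∀ U ∈ 𝓝 p, ∀ h f₁ g₁ : X → ℂ, HoloOn n h U → HoloOn n f₁ U → HoloOn n g₁ U →
    (∀ x ∈ U, f x = h x * f₁ x ∧ g x = h x * g₁ x) → h p ≠ 0

/-- The `ℝ≥0∞`-valued modulus of the strong meromorphic function `f/g` at a point
(`∞` at poles). -/
def smval (f g : X → ℂ) (x : X) : ℝ≥0∞ :=
  if g x = 0 then ⊤ else (‖f x / g x‖₊ : ℝ≥0∞)

/-- The strong meromorphic hull of `K`: points where every strong meromorphic function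
(quotient of entire functions with pointwise coprime germs) whose indeterminacy locus
avoids `K ∪ {p}` satisfies `|m(p)| ≤ ‖m‖_K`. -/
def SMhull (K : Set X) : Set X :=
  {p | ∀ f g : X → ℂ, Holo n f → Holo n g → (¬ ∀ x, g x = 0) →
      (∀ x : X, CoprimeAt n f g x) →
      (∀ q ∈ K ∪ {p}, ¬ (f q = 0 ∧ g q = 0)) →
      smval f g p ≤ ⨆ x ∈ K, smval f g x}

/-- `H(K)`: points `x` such that every entire function vanishing at `x` vanishes
somewhere on `K`. -/
def Hhull (K : Set X) : Set X :=
  {x | ∀ f : X → ℂ, Holo n f → f x = 0 → ∃ y ∈ K, f y = 0}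

/-- A complex hypersurface: a closed set that is locally the zero set of a nonzero
holomorphic function. -/
def IsHypersurface (Z : Set X) : Prop :=
  IsClosed Z ∧ Z.Nonempty ∧ ∀ p ∈ Z, ∃ U ∈ 𝓝 p, ∃ f : X → ℂ, HoloOn n f U ∧
    (¬ ∀ x ∈ U, f x = 0) ∧ (∀ x ∈ U, x ∈ Z ↔ f x = 0)

/-- `h(K)`: points through which every complex hypersurface meets `K`. -/
def hhull (K : Set X) : Set X :=
  {x | ∀ Z : Set X, IsHypersurface n Z → x ∈ Z → (Z ∩ K).Nonempty}

/-- A (global) representation of a meromorphic function on a Stein manifold as a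
quotient `f/g` of entire functions, `g ≢ 0`. -/
def MeroRep (f g : X → ℂ) : Prop :=
  Holo n f ∧ Holo n g ∧ ¬ ∀ x, g x = 0

/-- `p` is not a point of indeterminacy of the meromorphic function `f/g`: near `p`
there is a local representation `f₁/g₁` of `f/g` with `f₁ p ≠ 0` or `g₁ p ≠ 0`. -/
def NotIndet (f g : X → ℂ) (p : X) : Prop :=
  ∃ U ∈ 𝓝 p, ∃ f₁ g₁ : X → ℂ, HoloOn n f₁ U ∧ HoloOn n g₁ U ∧
    (∀ x ∈ U, f x * g₁ x = g x * f₁ x) ∧ (f₁ p ≠ 0 ∨ g₁ p ≠ 0)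

/-- The `ℝ≥0∞`-valued modulus of the meromorphic function `f/g` at `p`, computed from
local representations (`∞` if every local representation has a pole at `p`). -/
def mval (f g : X → ℂ) (p : X) : ℝ≥0∞ :=
  sInf {r : ℝ≥0∞ | ∃ U ∈ 𝓝 p, ∃ f₁ g₁ : X → ℂ, HoloOn n f₁ U ∧ HoloOn n g₁ U ∧
    (∀ x ∈ U, f x * g₁ x = g x * f₁ x) ∧ g₁ p ≠ 0 ∧ r = (‖f₁ p / g₁ p‖₊ : ℝ≥0∞)}

/-- The meromorphic hull of `K`. -/
def Mhull (K : Set X) : Set X :=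
  {p | ∀ f g : X → ℂ, MeroRep n f g → (∀ q ∈ K ∪ {p}, NotIndet n f g q) →
      mval n f g p ≤ ⨆ x ∈ K, mval n f g x}

/-- The meromorphic function `f/g` is regular (finite, no pole, no indeterminacy) at `q`. -/
def RegAt (f g : X → ℂ) (q : X) : Prop :=
  ∃ U ∈ 𝓝 q, ∃ f₁ g₁ : X → ℂ, HoloOn n f₁ U ∧ HoloOn n g₁ U ∧
    (∀ x ∈ U, f x * g₁ x = g x * f₁ x) ∧ g₁ q ≠ 0

open Classical in
/-- The complex value of the meromorphic function `f/g` at a regular point `q`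
(junk value `0` elsewhere). -/
def mfun (f g : X → ℂ) (q : X) : ℂ :=
  if h : ∃ r : ℂ, ∃ U ∈ 𝓝 q, ∃ f₁ g₁ : X → ℂ, HoloOn n f₁ U ∧ HoloOn n g₁ U ∧
      (∀ x ∈ U, f x * g₁ x = g x * f₁ x) ∧ g₁ q ≠ 0 ∧ r = f₁ q / g₁ q
  then h.choose else 0

/-- `f` vanishes to order at least `k` along the hypersurface `Z`: near each point of
`Z` one can write `f = u^k · h` with `u` a reduced local defining function of `Z`. -/
def OrdAtLeast (f : X → ℂ) (Z : Set X) (k : ℕ) : Prop :=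
  ∀ p ∈ Z, ∃ U ∈ 𝓝 p, ∃ u h : X → ℂ, HoloOn n u U ∧ HoloOn n h U ∧
    (∀ x ∈ U, x ∈ Z ↔ u x = 0) ∧
    (∀ V ∈ 𝓝 p, V ⊆ U → ∀ w : X → ℂ, HoloOn n w V → (∀ x ∈ V, x ∈ Z → w x = 0) →
      ∃ q : X → ℂ, HoloOn n q V ∧ ∀ x ∈ V, w x = u x * q x) ∧
    (∀ x ∈ U, f x = u x ^ k * h x)

/-- An irreducible complex hypersurface. -/
def IsIrrHyp (Z : Set X) : Prop :=
  IsHypersurface n Z ∧ ∀ Z₁ Z₂ : Set X, IsHypersurface n Z₁ → IsHypersurface n Z₂ →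
    Z = Z₁ ∪ Z₂ → Z = Z₁ ∨ Z = Z₂

/-- Rational convexity of a compact subset of `ℂ^N`. -/
def RatConvex (N : ℕ) (A : Set (Em N)) : Prop :=
  ∀ z : Em N, z ∉ A → ∃ P : MvPolynomial (Fin N) ℂ,
    MvPolynomial.eval (fun i => z i) P = 0 ∧
    ∀ w ∈ A, MvPolynomial.eval (fun i => w i) P ≠ 0

/-- The Levi form (complex Hessian) of a smooth real function on a complex vector
space, evaluated on the diagonal: `L_φ(x)(v) = ¼ (D²φ(v,v) + D²φ(iv,iv))`. -/
def leviForm {E : Type*} [NormedAddCommGroup E] [NormedSpace ℂ E]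
    (φ : E → ℝ) (x v : E) : ℝ :=
  ((iteratedFDeriv ℝ 2 φ x) ![v, v] +
    (iteratedFDeriv ℝ 2 φ x) ![Complex.I • v, Complex.I • v]) / 4

/-- The `dd^c` two-form of a function on a complex vector space, evaluated on a pair
of (real) tangent vectors. -/
def ddcQ {E : Type*} [NormedAddCommGroup E] [NormedSpace ℂ E]
    (φ : E → ℝ) (x u v : E) : ℝ :=
  (iteratedFDeriv ℝ 2 φ x) ![v, Complex.I • u] -
    (iteratedFDeriv ℝ 2 φ x) ![u, Complex.I • v]

/-- Smoothness (over `ℝ`) at a point of a real function on the manifold, read in the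
chart at that point. -/
def MSmoothAt (φ : X → ℝ) (x : X) : Prop :=
  ContDiffAt ℝ (⊤ : ℕ∞) (fun z => φ ((chartAt (Em n) x).symm z)) ((chartAt (Em n) x) x)

/-- The Levi form of a function on the manifold, read in the chart at the point. -/
def mLevi (φ : X → ℝ) (x : X) (v : Em n) : ℝ :=
  leviForm (fun z => φ ((chartAt (Em n) x).symm z)) ((chartAt (Em n) x) x) v

/-- The `dd^c` two-form of a function on the manifold, read in the chart at the point. -/
def mddc (φ : X → ℝ) (x : X) (u v : Em n) : ℝ :=
  ddcQ (fun z => φ ((chartAt (Em n) x).symm z)) ((chartAt (Em n) x) x) u v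

/-- A Kähler form, recorded through its pointwise Hermitian values `q x v`
(in the chart at `x`): it locally has a smooth potential and is positive definite. -/
def IsKahlerQ (q : X → Em n → ℝ) : Prop :=
  (∀ x : X, ∃ U ∈ 𝓝 x, ∃ φ : X → ℝ, (∀ y ∈ U, MSmoothAt n φ y) ∧
      ∀ y ∈ U, ∀ v, q y v = mLevi n φ y v) ∧
  ∀ x : X, ∀ v, v ≠ 0 → 0 < q x v

/-- A closed complex submanifold: locally the zero set of a holomorphic submersion. -/
def IsClosedComplexSubmanifold (Z : Set X) : Prop :=
  IsClosed Z ∧ ∀ p ∈ Z, ∃ (m : ℕ) (U : Set X), U ∈ 𝓝 p ∧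
    ∃ F : X → Em m, MDifferentiableOn 𝓘(ℂ, Em n) 𝓘(ℂ, Em m) F U ∧
      (∀ x ∈ U, x ∈ Z ↔ F x = 0) ∧
      Function.Surjective (mfderiv 𝓘(ℂ, Em n) 𝓘(ℂ, Em m) F p)

/-- Complex tangent vectors to `Z` at `p` (velocities of holomorphic curves in `Z`). -/
def CplxTangentAt (Z : Set X) (p : X) : Set (Em n) :=
  {v | ∃ γ : ℂ → X, γ 0 = p ∧ MDifferentiable 𝓘(ℂ) 𝓘(ℂ, Em n) γ ∧
    (∀ t, γ t ∈ Z) ∧ mfderiv 𝓘(ℂ) 𝓘(ℂ, Em n) γ 0 (show TangentSpace 𝓘(ℂ) (0:ℂ) from (1:ℂ)) = v}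

/-- Real tangent vectors to `S` at `p` (velocities of real curves in `S`). -/
def RTangentAt (S : Set X) (p : X) : Set (Em n) :=
  {v | ∃ γ : ℝ → X, γ 0 = p ∧ MDifferentiable 𝓘(ℝ) 𝓘(ℝ, Em n) γ ∧
    (∀ t, γ t ∈ S) ∧ mfderiv 𝓘(ℝ) 𝓘(ℝ, Em n) γ 0 (show TangentSpace 𝓘(ℝ) (0:ℝ) from (1:ℝ)) = v}

/-- A compact smooth real submanifold: compact, and locally the zero set of a smooth
real submersion. -/
def IsCompactRealSubmanifold (S : Set X) : Prop :=
  IsCompact S ∧ ∀ p ∈ S, ∃ (m : ℕ) (U : Set X), U ∈ 𝓝 p ∧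
    ∃ F : X → EuclideanSpace ℝ (Fin m),
      ContMDiffOn 𝓘(ℝ, Em n) 𝓘(ℝ, EuclideanSpace ℝ (Fin m)) (⊤ : ℕ∞) F U ∧
      (∀ x ∈ U, x ∈ S ↔ F x = 0) ∧
      Function.Surjective (mfderiv 𝓘(ℝ, Em n) 𝓘(ℝ, EuclideanSpace ℝ (Fin m)) F p)

/-- `S` is totally real: no tangent space contains a complex line. -/
def IsTotallyReal (S : Set X) : Prop :=
  ∀ p ∈ S, ∀ v ∈ RTangentAt n S p, v ≠ 0 → Complex.I • v ∉ RTangentAt n S p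

/-- Čech data (over the tautological cover indexed by points) for a holomorphic line
bundle together with a Hermitian metric of curvature `ω`, whose underlying bundle is
holomorphically trivial: this encodes `[ω] = 0 ∈ H²(X, ℤ)` for the Hodge form `ω`. -/
def HodgeTrivData (ω : X → Em n → ℝ) : Prop :=
  ∃ (ι : Type) (U : ι → Set X), (∀ i, IsOpen (U i)) ∧ (∀ x : X, ∃ i, x ∈ U i) ∧
    ∃ (φl : ι → X → ℝ) (g : ι → ι → X → ℂ) (h : ι → X → ℂ),
      (∀ i, ∀ y ∈ U i, MSmoothAt n (φl i) y) ∧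
      (∀ i, ∀ y ∈ U i, ∀ v, ω y v = mLevi n (φl i) y v) ∧
      (∀ i j, HoloOn n (g i j) (U i ∩ U j) ∧ ∀ x ∈ U i ∩ U j, g i j x ≠ 0) ∧
      (∀ i j k, ∀ x ∈ U i ∩ U j ∩ U k, g i j x * g j k x = g i k x) ∧
      (∀ i j, ∀ x ∈ U i ∩ U j, φl i x - φl j x = Real.log (‖g i j x‖ ^ 2)) ∧
      (∀ i, HoloOn n (h i) (U i) ∧ ∀ x ∈ U i, h i x ≠ 0) ∧
      (∀ i j, ∀ x ∈ U i ∩ U j, g i j x = h i x / h j x)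

/-- A holomorphic line bundle on `X`, given by a Čech cocycle over the tautological
cover indexed by the points of `X`. -/
structure CechBundle (n : ℕ) (X : Type*) [TopologicalSpace X] [ChartedSpace (Em n) X] where
  U : X → Set X
  isOpen : ∀ i, IsOpen (U i)
  mem : ∀ i, i ∈ U i
  g : X → X → X → ℂ
  holo : ∀ i j, HoloOn n (g i j) (U i ∩ U j)
  ne : ∀ i j, ∀ x ∈ U i ∩ U j, g i j x ≠ 0
  cocycle : ∀ i j k, ∀ x ∈ U i ∩ U j ∩ U k, g i j x * g j k x = g i k x
  one : ∀ i, ∀ x ∈ U i, g i i x = 1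

/-- A global holomorphic section of a Čech line bundle. -/
def IsSection (L : CechBundle n X) (s : X → X → ℂ) : Prop :=
  (∀ i, HoloOn n (s i) (L.U i)) ∧
  ∀ i j, ∀ x ∈ L.U i ∩ L.U j, s i x = L.g i j x * s j x

/-- `L₃` is the tensor product of `L₁` and `L₂`. -/
def IsTensor (L₁ L₂ L₃ : CechBundle n X) : Prop :=
  (∀ i, L₃.U i = L₁.U i ∩ L₂.U i) ∧
  ∀ i j, ∀ x ∈ L₃.U i ∩ L₃.U j, L₃.g i j x = L₁.g i j x * L₂.g i j x

/-- Isomorphism of Čech line bundles. -/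
def CBIso (L₁ L₂ : CechBundle n X) : Prop :=
  ∃ h : X → X → ℂ, (∀ i, HoloOn n (h i) (L₁.U i ∩ L₂.U i)) ∧
    (∀ i, ∀ x ∈ L₁.U i ∩ L₂.U i, h i x ≠ 0) ∧
    ∀ i j, ∀ x ∈ (L₁.U i ∩ L₂.U i) ∩ (L₁.U j ∩ L₂.U j),
      L₁.g i j x * h j x = h i x * L₂.g i j x

/-- The hull of `K` with respect to zero sets of sections of bundles in `G`. -/
def Ghull (G : Set (CechBundle n X)) (K : Set X) : Set X :=
  {x | ∀ L ∈ G, ∀ s : X → X → ℂ, IsSection n L s → s x x = 0 → ∃ y ∈ K, s y y = 0}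

end

/-! If `p ∈ H(K)` and `m = f/g`, the entire function `g` (when `g p = 0`) or `f - m(p) g`
vanishes at `p`, hence at some `y ∈ K`, and there `m` takes the same modulus as at `p`
(both `∞`, resp. `|m(p)|` because `f`, `g` have no common zero on `K`). Conversely, an entire
`w` with `w p = 0` and no zero on `K` gives `m = 1/w`, infinite at `p` and bounded on the
compact set `K`. -/

section SMhull

lemma smval_of_eq_zero {X : Type*} {f g : X → ℂ} {x : X} (hg : g x = 0) : smval f g x = ⊤ := by
  simp [smval, hg]

lemma smval_of_ne_zero {X : Type*} {f g : X → ℂ} {x : X} (hg : g x ≠ 0) :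
    smval f g x = ‖f x / g x‖ₑ := by
  simp [smval, hg, enorm]

variable {n : ℕ} {X : Type*} [TopologicalSpace X] [ChartedSpace (Em n) X]

lemma notMem_Hhull_iff {K : Set X} {p : X} :
    p ∉ Hhull n K ↔ ∃ w : X → ℂ, Holo n w ∧ w p = 0 ∧ ∀ y ∈ K, w y ≠ 0 := by
  simp [Hhull]

lemma coprimeAt_of_left_ne_zero {f : X → ℂ} (g : X → ℂ) {x : X} (hf : f x ≠ 0) :
    CoprimeAt n f g x := by
  intro U hU h f₁ g₁ _ _ _ hfg hx
  exact hf (by rw [(hfg x (mem_of_mem_nhds hU)).1, hx, zero_mul])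

lemma exists_smval_eq_of_mem_Hhull {K : Set X} {p : X} (hp : p ∈ Hhull n K) {f g : X → ℂ}
    (hf : Holo n f) (hg : Holo n g) (hfgK : ∀ y ∈ K, ¬ (f y = 0 ∧ g y = 0)) :
    ∃ y ∈ K, smval f g y = smval f g p := by
  by_cases hgp : g p = 0
  · obtain ⟨y, hyK, hgy⟩ := hp g hg hgp
    exact ⟨y, hyK, by rw [smval_of_eq_zero hgy, smval_of_eq_zero hgp]⟩
  · set c := f p / g p
    obtain ⟨y, hyK, hy⟩ := hp (fun x => f x - c * g x) (hf.sub (hg.const_smul c))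
      (by simp [c, div_mul_cancel₀ _ hgp])
    have hfy : f y = c * g y := sub_eq_zero.mp hy
    have hgy : g y ≠ 0 := fun h0 => hfgK y hyK ⟨by rw [hfy, h0, mul_zero], h0⟩
    refine ⟨y, hyK, ?_⟩
    rw [smval_of_ne_zero hgy, smval_of_ne_zero hgp, hfy, mul_div_cancel_right₀ _ hgy]

lemma smval_le_iSup_of_mem_Hhull {K : Set X} {p : X} (hp : p ∈ Hhull n K) {f g : X → ℂ}
    (hf : Holo n f) (hg : Holo n g) (hfgK : ∀ y ∈ K, ¬ (f y = 0 ∧ g y = 0)) :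
    smval f g p ≤ ⨆ x ∈ K, smval f g x := by
  obtain ⟨y, hyK, hy⟩ := exists_smval_eq_of_mem_Hhull hp hf hg hfgK
  exact hy ▸ le_biSup _ hyK

lemma iSup_smval_lt_top {K : Set X} (hK : IsCompact K) {f g : X → ℂ} (hf : Continuous f)
    (hg : Continuous g) (hgK : ∀ y ∈ K, g y ≠ 0) :
    ⨆ x ∈ K, smval f g x < ⊤ := by
  obtain ⟨C, hC⟩ := hK.exists_bound_of_continuousOn
    (hf.continuousOn.div hg.continuousOn hgK)
  refine lt_of_le_of_lt (iSup₂_le fun x hx => ?_) (ENNReal.ofReal_lt_top (r := C))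
  rw [smval_of_ne_zero (hgK x hx), ← ofReal_norm]
  exact ENNReal.ofReal_le_ofReal (hC x hx)

lemma exists_smval_lt_of_notMem_Hhull {K : Set X} (hK : IsCompact K) {p : X}
    (hp : p ∉ Hhull n K) :
    ∃ f g : X → ℂ, Holo n f ∧ Holo n g ∧ (¬ ∀ x, g x = 0) ∧
      (∀ x : X, CoprimeAt n f g x) ∧
      (∀ q ∈ K ∪ {p}, ¬ (f q = 0 ∧ g q = 0)) ∧
      (⨆ x ∈ K, smval f g x) < smval f g p := by
  obtain ⟨w, hw, hwp, hwK⟩ := notMem_Hhull_iff.mp hp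
  rcases K.eq_empty_or_nonempty with rfl | ⟨y, hyK⟩
  · refine ⟨fun _ => 1, fun _ => 1, mdifferentiable_const, mdifferentiable_const,
      fun h => one_ne_zero (h p), fun x => coprimeAt_of_left_ne_zero _ one_ne_zero,
      fun q _ h => one_ne_zero h.1, ?_⟩
    simp [smval]
  · refine ⟨fun _ => 1, w, mdifferentiable_const, hw, fun h => hwK y hyK (h y),
      fun x => coprimeAt_of_left_ne_zero _ one_ne_zero, fun q _ h => one_ne_zero h.1, ?_⟩
    rw [smval_of_eq_zero hwp]
    exact iSup_smval_lt_top hK continuous_const hw.continuous hwK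

end SMhull

section Statements

variable (n : ℕ) {X : Type*} [TopologicalSpace X] [ChartedSpace (Em n) X]

theorem stmt0 (K : Set X) (hK : IsCompact K) :
    (∀ p : X, p ∉ Hhull n K ↔
      ∃ f g : X → ℂ, Holo n f ∧ Holo n g ∧ (¬ ∀ x, g x = 0) ∧
        (∀ x : X, CoprimeAt n f g x) ∧
        (∀ q ∈ K ∪ {p}, ¬ (f q = 0 ∧ g q = 0)) ∧
        (⨆ x ∈ K, smval f g x) < smval f g p) ∧
    Hhull n K = SMhull n K := by
  have bounded_on_hull : ∀ p ∈ Hhull n K, ∀ f g : X → ℂ, Holo n f → Holo n g →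
      (∀ q ∈ K ∪ {p}, ¬ (f q = 0 ∧ g q = 0)) → smval f g p ≤ ⨆ x ∈ K, smval f g x :=
    fun p hp f g hf hg hfg =>
      smval_le_iSup_of_mem_Hhull hp hf hg fun q hq => hfg q (Or.inl hq)
  refine ⟨fun p => ⟨exists_smval_lt_of_notMem_Hhull hK, ?_⟩, Set.ext fun p => ⟨?_, ?_⟩⟩
  · rintro ⟨f, g, hf, hg, -, -, hfg, hlt⟩ hp
    exact (bounded_on_hull p hp f g hf hg hfg).not_gt hlt
  · intro hp f g hf hg _ _ hfg
    exact bounded_on_hull p hp f g hf hg hfg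
  · intro hsm
    by_contra hp
    obtain ⟨f, g, hf, hg, hg0, hcop, hfg, hlt⟩ := exists_smval_lt_of_notMem_Hhull hK hp
    exact (hsm f g hf hg hg0 hcop hfg).not_gt hlt

end Statements
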